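/- arXiv:1509.07428 — 2 statements merged into one kernel-verified Lean document; each statement's English description precedes it below -/
import Mathlib

section
/- Let X be an infinite-dimensional complex Banach space and T ∈ L(X). If T fails to admit an almost-invariant halfspace of defect ≤ 1, then there exists a vector e ∈ X such that the closed linear span of the orbit {T^n e : n = 0, 1, 2, ...} has finite codimension in X. -/
/-- A halfspace of a Banach space `X`: a closed subspace of infinite dimension
and infinite codimension. -/
def IsHalfspace {X : Type*} [NormedAddCommGroup X] [NormedSpace ℂ X]
    (Y : Submodule ℂ X) : Prop :=
  IsClosed (Y : Set X) ∧ ¬FiniteDimensional ℂ Y ∧ ¬FiniteDimensional ℂ (X ⧸ Y)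

/-- `T` admits an almost-invariant halfspace of defect at most 1. -/
def HasAIHS1 {X : Type*} [NormedAddCommGroup X] [NormedSpace ℂ X]
    (T : X →L[ℂ] X) : Prop :=
  ∃ Y : Submodule ℂ X, IsHalfspace Y ∧
    ∃ E : Submodule ℂ X, FiniteDimensional ℂ E ∧ Module.finrank ℂ E ≤ 1 ∧
      ∀ y ∈ Y, T y ∈ Y ⊔ E

/-!
If the closed span of some orbit is infinite-dimensional, it is a `T`-invariant halfspace unless
it has finite codimension. Otherwise every orbit spans a finite-dimensional space. By Baire, one
of the closed sets `{y | y, T y, …, T^(n-1) y are dependent}` has interior, and since dependence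
along a line `x₀ + t • y` is the vanishing of a polynomial in `t`, it then holds for every `y`.
So `T` has at most `n` eigenvalues, and if all eigenspaces were finite-dimensional then `X` would
be the countable union of the finite-dimensional spaces `⨆ μ, ker (T - μ)^k`, contradicting
Baire again. Hence some eigenspace is infinite-dimensional, and every halfspace inside it is
invariant.
-/

open Submodule Set

theorem linearIndependent_of_biorthogonal {R M ι : Type*} [CommRing R] [AddCommGroup M]
    [Module R M] [DecidableEq ι] {v : ι → M} (g : ι → M →ₗ[R] R)
    (hg : ∀ i j, g i (v j) = if i = j then 1 else 0) : LinearIndependent R v := by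
  refine LinearIndependent.of_comp (LinearMap.pi g) ?_
  have : ⇑(LinearMap.pi g) ∘ v = fun j => Pi.single j 1 := by
    ext j i
    simp [hg, Pi.single_apply]
  rw [this]
  exact Pi.linearIndependent_single_one ι R

theorem not_finiteDimensional_of_biorthogonal {K M : Type*} [Field K] [AddCommGroup M]
    [Module K M] {v : ℕ → M} (g : ℕ → M →ₗ[K] K)
    (hg : ∀ i j, g i (v j) = if i = j then 1 else 0) : ¬FiniteDimensional K M :=
  fun _ => Infinite.not_finite (linearIndependent_of_biorthogonal g hg).finite

theorem exists_mem_ker_notMem {K M V : Type*} [Field K] [AddCommGroup M] [Module K M]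
    [AddCommGroup V] [Module K V] [FiniteDimensional K V] {N S : Submodule K M}
    (hN : ¬FiniteDimensional K N) [FiniteDimensional K S] (L : M →ₗ[K] V) :
    ∃ x ∈ N, L x = 0 ∧ x ∉ S := by
  by_contra! h
  apply hN
  let f := L ∘ₗ N.subtype
  have : FiniteDimensional K (LinearMap.ker f) :=
    Module.Finite.of_injective
      (LinearMap.codRestrict S (N.subtype ∘ₗ (LinearMap.ker f).subtype) fun y => h _ y.1.2 y.2)
      fun y z hyz => by ext; exact congrArg (fun w : S => (w : M)) hyz
  have : FiniteDimensional K (comap f ⊤) := inferInstance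
  rw [comap_top] at this
  exact Module.Finite.equiv (topEquiv (R := K) (M := N))

theorem ContinuousLinearMap.span_range_pow_apply_mem_invtSubmodule {R M : Type*} [Semiring R]
    [TopologicalSpace M] [AddCommMonoid M] [Module R M] (T : M →L[R] M) (x : M) :
    span R (range fun n : ℕ => (T ^ n) x) ∈ Module.End.invtSubmodule (T : M →ₗ[R] M) := by
  rw [Module.End.mem_invtSubmodule_iff_map_le, map_span, span_le]
  rintro _ ⟨_, ⟨n, rfl⟩, rfl⟩
  exact subset_span ⟨n + 1, by simp [pow_succ']⟩

namespace Module.End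

variable {K V : Type*} [Field K] [AddCommGroup V] [Module K V]

theorem exists_linearIndependent_pow_apply (f : End K V) {n : ℕ} {μ : Fin n → K}
    (hμ : Function.Injective μ) (hf : ∀ i, f.HasEigenvalue (μ i)) :
    ∃ y, LinearIndependent K fun k : Fin n => (f ^ (k : ℕ)) y := by
  choose v hv using fun i => (hf i).exists_hasEigenvector
  refine ⟨∑ i, v i, ?_⟩
  have hpow : ∀ k : Fin n, (f ^ (k : ℕ)) (∑ i, v i) =
      Fintype.linearCombination K v ((Matrix.vandermonde μ).transpose k) := fun k => by
    simp [Fintype.linearCombination_apply, Matrix.vandermonde_apply, (hv _).pow_apply]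
  simp_rw [hpow]
  have hcols : LinearIndependent K (Matrix.vandermonde μ).transpose :=
    Matrix.linearIndependent_rows_of_det_ne_zero (by
      rwa [Matrix.det_transpose, Matrix.det_vandermonde_ne_zero_iff])
  have hinj := (f.eigenvectors_linearIndependent' μ hμ v hv).fintypeLinearCombination_injective
  exact hcols.map' _ (LinearMap.ker_eq_bot.2 hinj)

theorem finite_setOf_hasEigenvalue (f : End K V) {n : ℕ}
    (hf : ∀ y, ¬LinearIndependent K fun k : Fin n => (f ^ (k : ℕ)) y) :
    {μ | f.HasEigenvalue μ}.Finite := by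
  by_contra hinf
  let μ := Set.Infinite.natEmbedding _ hinf
  obtain ⟨y, hy⟩ := exists_linearIndependent_pow_apply f (μ := fun i : Fin n => μ i)
    (fun i j hij => Fin.ext (μ.injective (Subtype.ext hij))) fun i => (μ i).2
  exact hf y hy

theorem finiteDimensional_genEigenspace (f : End K V) (μ : K)
    [FiniteDimensional K (f.eigenspace μ)] (k : ℕ) :
    FiniteDimensional K (f.genEigenspace μ k) := by
  have : FiniteDimensional K (LinearMap.ker (f - μ • 1)) := by
    rwa [← eigenspace_def]
  induction k with
  | zero =>
    rw [genEigenspace_nat, pow_zero, one_eq_id, LinearMap.ker_id]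
    infer_instance
  | succ k ih =>
    rw [genEigenspace_nat, pow_succ, mul_eq_comp, LinearMap.ker_comp, ← genEigenspace_nat]
    infer_instance

theorem finiteDimensional_iSup_genEigenspace (f : End K V)
    (hf : {μ | f.HasEigenvalue μ}.Finite) [∀ μ, FiniteDimensional K (f.eigenspace μ)] (k : ℕ) :
    FiniteDimensional K ↥(⨆ μ, f.genEigenspace μ k) := by
  have := f.finiteDimensional_genEigenspace
  refine Submodule.finiteDimensional_of_le (iSup_le fun μ => ?_ :
    _ ≤ hf.toFinset.sup fun μ => f.genEigenspace μ k)
  by_cases hμ : f.HasEigenvalue μ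
  · exact Finset.le_sup (f := fun μ => f.genEigenspace μ k) (hf.mem_toFinset.2 hμ)
  · have : f.genEigenspace μ k = ⊥ := not_not.1 (mt hasEigenvalue_of_hasGenEigenvalue hμ)
    simp [this]

theorem mem_iSup_maxGenEigenspace_of_mem_invtSubmodule [IsAlgClosed K] {f : End K V}
    {p : Submodule K V} (hp : p ∈ f.invtSubmodule) [FiniteDimensional K p] {x : V} (hx : x ∈ p) :
    x ∈ ⨆ μ, f.maxGenEigenspace μ := by
  have hfp : ∀ y ∈ p, f y ∈ p := fun y hy => (mem_invtSubmodule f).1 hp hy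
  have : (⟨x, hx⟩ : p) ∈ ⨆ μ, maxGenEigenspace (f.restrict hfp) μ := by
    rw [iSup_maxGenEigenspace_eq_top]; trivial
  simp_rw [genEigenspace_restrict] at this
  exact (iSup_le fun μ => comap_mono (le_iSup _ μ) : _ ≤ comap p.subtype _) this

theorem exists_mem_iSup_genEigenspace_of_mem_iSup_maxGenEigenspace (f : End K V) {x : V}
    (hx : x ∈ ⨆ μ, f.maxGenEigenspace μ) : ∃ k : ℕ, x ∈ ⨆ μ, f.genEigenspace μ k := by
  simp_rw [← iSup_genEigenspace_eq] at hx
  rw [iSup_comm] at hx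
  refine (mem_iSup_of_directed _ (Monotone.directed_le fun k l hkl => ?_)).1 hx
  exact iSup_mono fun μ => (f.genEigenspace μ).monotone (by exact_mod_cast hkl)

end Module.End

theorem dense_setOf_linearIndependent {𝕜 X Y ι : Type*} [NontriviallyNormedField 𝕜]
    [AddCommGroup X] [TopologicalSpace X] [Module 𝕜 X] [ContinuousAdd X] [ContinuousSMul 𝕜 X]
    [AddCommGroup Y] [Module 𝕜 Y] [Fintype ι] (A : ι → X →ₗ[𝕜] Y) {y : X}
    (hy : LinearIndependent 𝕜 fun i => A i y) :
    Dense {z | LinearIndependent 𝕜 fun i => A i z} := by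
  intro x₀
  let Φ : X → (ι → 𝕜) →ₗ[𝕜] Y := fun z => Fintype.linearCombination 𝕜 fun i => A i z
  have hΦ : ∀ t : 𝕜, Φ (x₀ + t • y) = Φ x₀ + t • Φ y := fun t => by
    ext c
    simp [Φ, Fintype.linearCombination_apply, Finset.sum_add_distrib, Finset.smul_sum,
      smul_comm t]
  obtain ⟨π, hπ⟩ := (Φ y).exists_leftInverse_of_injective
    (LinearMap.ker_eq_bot.2 hy.fintypeLinearCombination_injective)
  let B : Module.End 𝕜 (ι → 𝕜) := π ∘ₗ Φ x₀
  -- `det (π ∘ Φ (x₀ + t • y)) = det (B + t • 1)` is this polynomial evaluated at `t`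
  have hroots : {t | (-B).charpoly.IsRoot t}.Finite :=
    Polynomial.finite_setOfPred_isRoot (LinearMap.charpoly_monic _).ne_zero
  have hli : ∀ t, ¬(-B).charpoly.IsRoot t →
      x₀ + t • y ∈ {z | LinearIndependent 𝕜 fun i => A i z} := by
    intro t ht
    have hunit : IsUnit (π ∘ₗ Φ (x₀ + t • y)) := by
      rw [LinearMap.isUnit_iff_isUnit_det, isUnit_iff_ne_zero]
      convert ht using 1
      rw [Polynomial.IsRoot, LinearMap.eval_charpoly, hΦ, LinearMap.comp_add,
        LinearMap.comp_smul, hπ]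
      simp [B, Module.algebraMap_end_eq_smul_id, add_comm]
    have hinj := ((Module.End.isUnit_iff _).1 hunit).1
    rw [LinearMap.coe_comp] at hinj
    exact linearIndependent_iff_injective_fintypeLinearCombination.2 hinj.of_comp
  have h0 : (0 : 𝕜) ∈ closure {t | (-B).charpoly.IsRoot t}ᶜ := by
    simpa only [← compl_eq_univ_sdiff] using dense_univ.sdiff_finite hroots 0
  simpa using map_mem_closure (continuous_const.add (continuous_id.smul continuous_const)) h0 hli

section Baire

variable {𝕜 X : Type*} [NontriviallyNormedField 𝕜] [CompleteSpace 𝕜] [NormedAddCommGroup X]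
  [NormedSpace 𝕜 X] [CompleteSpace X]

theorem exists_forall_not_linearIndependent_pow_apply (T : X →L[𝕜] X)
    (hT : ∀ e, FiniteDimensional 𝕜 (span 𝕜 (range fun n : ℕ => (T ^ n) e))) :
    ∃ n, ∀ y, ¬LinearIndependent 𝕜 fun i : Fin n => (T ^ (i : ℕ)) y := by
  let C : ℕ → Set X := fun n => {y | ¬LinearIndependent 𝕜 fun i : Fin n => (T ^ (i : ℕ)) y}
  have hC : ∀ n, IsClosed (C n) := fun n => by
    have : Continuous fun y (i : Fin n) => (T ^ (i : ℕ)) y :=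
      continuous_pi fun i => (T ^ (i : ℕ)).continuous
    exact (isOpen_setOfPred_linearIndependent.preimage this).isClosed_compl
  have hcover : ⋃ n, C n = univ := by
    refine eq_univ_of_forall fun y => mem_iUnion.2 ?_
    let d := Module.finrank 𝕜 (span 𝕜 (range fun n : ℕ => (T ^ n) y))
    refine ⟨d + 1, fun hli => ?_⟩
    have hle : span 𝕜 (range fun i : Fin (d + 1) => (T ^ (i : ℕ)) y) ≤
        span 𝕜 (range fun n : ℕ => (T ^ n) y) :=
      span_mono (by rintro _ ⟨i, rfl⟩; exact ⟨i, rfl⟩)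
    have := Submodule.finrank_mono hle
    rw [finrank_span_eq_card hli, Fintype.card_fin] at this
    omega
  obtain ⟨n, hn⟩ := nonempty_interior_of_iUnion_of_closed hC hcover
  refine ⟨n, fun y hy => ?_⟩
  have hdense := dense_setOf_linearIndependent
    (fun i : Fin n => ((T ^ (i : ℕ) : X →L[𝕜] X) : X →ₗ[𝕜] X)) hy
  simp only [ContinuousLinearMap.coe_coe] at hdense
  obtain ⟨z, hzC, hz⟩ := hdense.inter_open_nonempty _ isOpen_interior hn
  exact interior_subset hzC hz

theorem finiteDimensional_of_forall_exists_mem (D : ℕ → Submodule 𝕜 X)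
    [∀ m, FiniteDimensional 𝕜 (D m)] (hD : ∀ x, ∃ m, x ∈ D m) : FiniteDimensional 𝕜 X := by
  obtain ⟨m, hm⟩ := nonempty_interior_of_iUnion_of_closed
    (fun m => (D m).closed_of_finiteDimensional)
    (eq_univ_of_forall fun x => mem_iUnion.2 (hD x))
  have := NormedField.nhdsWithin_isUnit_neBot (α := 𝕜)
  have htop : D m = ⊤ := (D m).eq_top_of_nonempty_interior' hm
  exact Module.Finite.equiv ((LinearEquiv.ofEq _ _ htop).trans topEquiv)

end Baire

section Biorthogonal

variable {𝕜 X : Type*} [RCLike 𝕜] [NormedAddCommGroup X] [NormedSpace 𝕜 X]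

theorem exists_dual_eq_one_of_notMem {S : Submodule 𝕜 X} [FiniteDimensional 𝕜 S] {x : X}
    (hx : x ∉ S) : ∃ g : X →L[𝕜] 𝕜, g x = 1 ∧ ∀ y ∈ S, g y = 0 := by
  have : IsClosed (S : Set X) := S.closed_of_finiteDimensional
  obtain ⟨f, hf⟩ := SeparatingDual.exists_eq_one (R := 𝕜) (x := S.mkQ x)
    (by rwa [Ne, mkQ_apply, Quotient.mk_eq_zero])
  refine ⟨f.comp S.mkQL, hf, fun y hy => ?_⟩
  simp [(Quotient.mk_eq_zero S).2 hy]

theorem exists_biorthogonal_seq {N : Submodule 𝕜 X} (hN : ¬FiniteDimensional 𝕜 N) :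
    ∃ (x : ℕ → X) (g : ℕ → X →L[𝕜] 𝕜), (∀ n, x n ∈ N) ∧
      ∀ i j, g i (x j) = if i = j then 1 else 0 := by
  obtain ⟨f, hfP, hfr⟩ := exists_seq_of_forall_finset_exists
    (fun p : X × (X →L[𝕜] 𝕜) => p.1 ∈ N ∧ p.2 p.1 = 1)
    (fun p q => p.2 q.1 = 0 ∧ q.2 p.1 = 0) fun s _ => by
      let S := span 𝕜 (Prod.fst '' (s : Set (X × (X →L[𝕜] 𝕜))))
      have : FiniteDimensional 𝕜 S := FiniteDimensional.span_of_finite 𝕜 (s.finite_toSet.image _)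
      obtain ⟨x, hxN, hx0, hxS⟩ :=
        exists_mem_ker_notMem hN (LinearMap.pi fun p : s => (p.1.2 : X →ₗ[𝕜] 𝕜)) (S := S)
      obtain ⟨g, hgx, hgS⟩ := exists_dual_eq_one_of_notMem hxS
      exact ⟨(x, g), ⟨hxN, hgx⟩, fun p hp =>
        ⟨congrFun hx0 ⟨p, hp⟩, hgS _ (subset_span ⟨p, hp, rfl⟩)⟩⟩
  refine ⟨fun n => (f n).1, fun n => (f n).2, fun n => (hfP n).1, fun i j => ?_⟩
  rcases lt_trichotomy i j with h | rfl | h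
  · simp [h.ne, (hfr i j h).1]
  · simp [(hfP i).2]
  · simp [h.ne', (hfr j i h).2]

end Biorthogonal

section Halfspace

variable {X : Type*} [NormedAddCommGroup X] [NormedSpace ℂ X]

theorem exists_isHalfspace_le {N : Submodule ℂ X} (hNc : IsClosed (N : Set X))
    (hN : ¬FiniteDimensional ℂ N) : ∃ Y ≤ N, IsHalfspace Y := by
  obtain ⟨x, g, hxN, hxg⟩ := exists_biorthogonal_seq hN
  let Y := N ⊓ ⨅ k, LinearMap.ker (g (2 * k + 1) : X →ₗ[ℂ] ℂ)
  have hYg : ∀ k, Y ≤ LinearMap.ker (g (2 * k + 1) : X →ₗ[ℂ] ℂ) :=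
    fun k => inf_le_right.trans (iInf_le _ k)
  have hxY : ∀ k, x (2 * k) ∈ Y := fun k =>
    ⟨hxN _, mem_iInf _ |>.2 fun j => by simp [hxg, show 2 * j + 1 ≠ 2 * k by omega]⟩
  refine ⟨Y, inf_le_left, ?_, ?_, ?_⟩
  · rw [coe_inf, coe_iInf]
    exact hNc.inter (isClosed_iInter fun k => (g (2 * k + 1)).isClosed_ker)
  · exact not_finiteDimensional_of_biorthogonal (v := fun k => (⟨x (2 * k), hxY k⟩ : Y))
      (fun k => (g (2 * k) : X →ₗ[ℂ] ℂ) ∘ₗ Y.subtype) (by simp [hxg])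
  · exact not_finiteDimensional_of_biorthogonal (v := fun k => Y.mkQ (x (2 * k + 1)))
      (fun k => Y.liftQ _ (hYg k)) (by simp [hxg])

theorem hasAIHS1_of_isHalfspace_of_mem_invtSubmodule {T : X →L[ℂ] X} {Y : Submodule ℂ X}
    (hY : IsHalfspace Y) (hTY : Y ∈ Module.End.invtSubmodule (T : X →ₗ[ℂ] X)) : HasAIHS1 T :=
  ⟨Y, hY, ⊥, inferInstance, by simp, fun y hy => by simpa using hTY hy⟩

theorem hasAIHS1_of_not_finiteDimensional_eigenspace (T : X →L[ℂ] X) {μ : ℂ}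
    (hμ : ¬FiniteDimensional ℂ (Module.End.eigenspace (T : Module.End ℂ X) μ)) : HasAIHS1 T := by
  have hclosed : IsClosed (Module.End.eigenspace (T : Module.End ℂ X) μ : Set X) := by
    rw [show (Module.End.eigenspace (T : Module.End ℂ X) μ : Set X) = {y | T y = μ • y} from
      Set.ext fun y => Module.End.mem_eigenspace_iff]
    exact isClosed_eq T.continuous (continuous_const_smul μ)
  obtain ⟨Y, hYμ, hY⟩ := exists_isHalfspace_le hclosed hμ
  refine hasAIHS1_of_isHalfspace_of_mem_invtSubmodule hY
    ((Module.End.mem_invtSubmodule_iff_forall_mem_of_mem _).2 fun y hy => ?_)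
  rw [Module.End.mem_eigenspace_iff.1 (hYμ hy)]
  exact Y.smul_mem μ hy

theorem exists_not_finiteDimensional_eigenspace [CompleteSpace X] (hX : ¬FiniteDimensional ℂ X)
    (T : X →L[ℂ] X) (hT : ∀ e, FiniteDimensional ℂ (span ℂ (range fun n : ℕ => (T ^ n) e))) :
    ∃ μ, ¬FiniteDimensional ℂ (Module.End.eigenspace (T : Module.End ℂ X) μ) := by
  by_contra! hfin
  have hpow : ∀ (k : ℕ) x, ((T : Module.End ℂ X) ^ k) x = (T ^ k) x := fun k x => by
    rw [← ContinuousLinearMap.toLinearMap_pow, ContinuousLinearMap.coe_coe]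
  obtain ⟨n, hn⟩ := exists_forall_not_linearIndependent_pow_apply T hT
  have hΛ := Module.End.finite_setOf_hasEigenvalue (n := n) (T : Module.End ℂ X)
    (by simpa only [hpow] using hn)
  have := Module.End.finiteDimensional_iSup_genEigenspace _ hΛ
  refine hX (finiteDimensional_of_forall_exists_mem _ fun x =>
    Module.End.exists_mem_iSup_genEigenspace_of_mem_iSup_maxGenEigenspace (T : Module.End ℂ X) ?_)
  have := hT x
  exact Module.End.mem_iSup_maxGenEigenspace_of_mem_invtSubmodule
    (T.span_range_pow_apply_mem_invtSubmodule x) (subset_span ⟨0, by simp⟩)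

end Halfspace

/-- If `T` fails to admit an AIHS of defect ≤ 1, then there exists a vector `e`
whose orbit `{T^n e}` has closed linear span of finite codimension. -/
theorem orbit_span_finite_codimensional_of_no_aihs
    {X : Type*} [NormedAddCommGroup X] [NormedSpace ℂ X] [CompleteSpace X]
    (hX : ¬FiniteDimensional ℂ X) (T : X →L[ℂ] X)
    (hno : ¬HasAIHS1 T) :
    ∃ e : X, FiniteDimensional ℂ
      (X ⧸ (Submodule.span ℂ (Set.range fun n : ℕ => (T ^ n) e)).topologicalClosure) := by
  by_contra! hcodim
  by_cases hT : ∀ e, FiniteDimensional ℂ (span ℂ (range fun n : ℕ => (T ^ n) e))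
  · obtain ⟨μ, hμ⟩ := exists_not_finiteDimensional_eigenspace hX T hT
    exact hno (hasAIHS1_of_not_finiteDimensional_eigenspace T hμ)
  · obtain ⟨e, he⟩ := not_forall.1 hT
    let M := span ℂ (range fun n : ℕ => (T ^ n) e)
    have hM : IsHalfspace M.topologicalClosure :=
      ⟨M.isClosed_topologicalClosure, fun _ => he (finiteDimensional_of_le M.le_topologicalClosure),
        hcodim e⟩
    exact hno (hasAIHS1_of_isHalfspace_of_mem_invtSubmodule hM
      (topologicalClosure_mem_invtSubmodule (T.span_range_pow_apply_mem_invtSubmodule e)))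
end

section
/- Let X be a complex Banach space and T ∈ L(X). Suppose the null space N(T) is complemented in X, say X = W ⊕ N(T) for a closed subspace W, and let P_W : X → W be the bounded linear projection onto W along N(T). Then the operator P_W T|_W ∈ L(W) satisfies σ_su(P_W T|_W) ⊆ σ_su(T) ⊆ σ_su(P_W T|_W) ∪ {0}. If moreover W ≠ {0} and σ_su(T) is connected, then σ_su(T) = σ_su(P_W T|_W). -/
/-!
Since `P` fixes `W` and kills `N(T)`, `T P = T`, so a preimage `x` of `w ∈ W` under `λ - T`
projects to the preimage `P x` under `λ - S`. Conversely, for `λ ≠ 0`, a preimage of the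
`W`-component of `y` under `λ - S`, corrected by a vector of `N(T)`, is a preimage of `y` under
`λ - T`.

For the equality, `σ_su(S)` is closed, because a surjection survives small perturbations (its
open mapping constant lets one iterate approximate preimages), and nonempty, because it contains the boundary of the spectrum: near a
surjective `z - A`, the open mapping constant bounds the resolvent uniformly, so `z` cannot be a
limit of resolvent points without being one. Then `σ_su(T)` is covered by the closed sets
`σ_su(S) ≠ ∅` and `{0}`, and connectedness forces `0 ∈ σ_su(S)` whenever `0 ∈ σ_su(T)`.
-/

/-- The surjectivity spectrum of an operator: scalars `z` such that `z - A`
is not surjective. -/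
def surjSpectrum {E : Type*} [NormedAddCommGroup E] [NormedSpace ℂ E]
    (A : E →L[ℂ] E) : Set ℂ :=
  {z : ℂ | ¬Function.Surjective fun x => z • x - A x}

open Filter Topology

namespace ContinuousLinearMap

variable {𝕜 E F : Type*} [NontriviallyNormedField 𝕜] [NormedAddCommGroup E] [NormedSpace 𝕜 E]
  [NormedAddCommGroup F] [NormedSpace 𝕜 F]

theorem exists_preimage_norm_le_of_approx [CompleteSpace E] (f : E →L[𝕜] F) {C : ℝ} (hC : 0 ≤ C)
    (hf : ∀ y, ∃ x, ‖y - f x‖ ≤ 1 / 2 * ‖y‖ ∧ ‖x‖ ≤ C * ‖y‖) (y : F) :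
    ∃ x, f x = y ∧ ‖x‖ ≤ 2 * C * ‖y‖ := by
  choose r hr using hf
  set h : F → F := fun y => y - f (r y)
  have h_iter : ∀ n : ℕ, ‖h^[n] y‖ ≤ (1 / 2) ^ n * ‖y‖ := by
    intro n
    induction n with
    | zero => simp
    | succ n ih =>
      rw [Function.iterate_succ_apply', pow_succ', mul_assoc]
      exact (hr _).1.trans (by gcongr)
  set u : ℕ → E := fun n => r (h^[n] y)
  have hu : ∀ n, ‖u n‖ ≤ (1 / 2) ^ n * (C * ‖y‖) := fun n =>
    calc ‖u n‖ ≤ C * ‖h^[n] y‖ := (hr _).2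
    _ ≤ C * ((1 / 2) ^ n * ‖y‖) := by gcongr; exact h_iter n
    _ = (1 / 2) ^ n * (C * ‖y‖) := by ring
  have hgeom : Summable fun n : ℕ => (1 / 2 : ℝ) ^ n * (C * ‖y‖) :=
    summable_geometric_two.mul_right _
  have hu_norm : Summable fun n => ‖u n‖ := .of_nonneg_of_le (fun _ => norm_nonneg _) hu hgeom
  refine ⟨∑' n, u n, ?_, ?_⟩
  · have h_partial : ∀ n, f (∑ i ∈ Finset.range n, u i) = y - h^[n] y := by
      intro n
      induction n with
      | zero => simp
      | succ n ih =>
        rw [Finset.sum_range_succ, map_add, ih, Function.iterate_succ_apply', sub_add]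
    have h_lim : Tendsto (fun n => h^[n] y) atTop (𝓝 0) := by
      refine squeeze_zero_norm h_iter ?_
      simpa using (tendsto_pow_atTop_nhds_zero_of_lt_one (by norm_num : (0 : ℝ) ≤ 1 / 2)
        (by norm_num)).mul_const ‖y‖
    refine tendsto_nhds_unique ((f.continuous.tendsto _).comp
      hu_norm.of_norm.hasSum.tendsto_sum_nat) ?_
    simpa [Function.comp_def, h_partial] using tendsto_const_nhds.sub h_lim
  · calc ‖∑' n, u n‖ ≤ ∑' n, ‖u n‖ := norm_tsum_le_tsum_norm hu_norm
    _ ≤ ∑' n : ℕ, (1 / 2 : ℝ) ^ n * (C * ‖y‖) := hu_norm.tsum_le_tsum hu hgeom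
    _ = 2 * C * ‖y‖ := by rw [tsum_mul_right, tsum_geometric_two, mul_assoc]

theorem exists_preimage_norm_le_add [CompleteSpace E] {f g : E →L[𝕜] F} {C : ℝ} (hC : 0 ≤ C)
    (hf : ∀ y, ∃ x, f x = y ∧ ‖x‖ ≤ C * ‖y‖) (hg : ‖g‖ * C ≤ 1 / 2) (y : F) :
    ∃ x, (f + g) x = y ∧ ‖x‖ ≤ 2 * C * ‖y‖ := by
  refine (f + g).exists_preimage_norm_le_of_approx hC (fun y => ?_) y
  obtain ⟨x, rfl, hx⟩ := hf y
  refine ⟨x, ?_, hx⟩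
  calc ‖f x - (f + g) x‖ = ‖g x‖ := by simp
  _ ≤ ‖g‖ * (C * ‖f x‖) := g.le_of_opNorm_le le_rfl x |>.trans (by gcongr)
  _ ≤ 1 / 2 * ‖f x‖ := by rw [← mul_assoc]; gcongr

theorem norm_inverse_le_of_preimage_norm_le (u : (E →L[𝕜] E)ˣ) {C : ℝ} (hC : 0 ≤ C)
    (hu : ∀ y, ∃ x, (u : E →L[𝕜] E) x = y ∧ ‖x‖ ≤ C * ‖y‖) : ‖(↑u⁻¹ : E →L[𝕜] E)‖ ≤ C := by
  refine opNorm_le_bound _ hC fun y => ?_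
  obtain ⟨x, rfl, hx⟩ := hu y
  rwa [← comp_apply, ← mul_def, Units.inv_mul, one_apply_eq_self]

local notation "↑ₐ" => algebraMap 𝕜 (E →L[𝕜] E)

theorem norm_algebraMap_le (c : 𝕜) : ‖↑ₐ c‖ ≤ ‖c‖ := by
  rw [norm_algebraMap]
  exact mul_le_of_le_one_right (norm_nonneg c) norm_id_le

theorem exists_preimage_norm_le_algebraMap_sub [CompleteSpace E] (A : E →L[𝕜] E) {z₀ z : 𝕜}
    {C : ℝ} (hC : 0 < C) (h₀ : ∀ y, ∃ x, (↑ₐ z₀ - A) x = y ∧ ‖x‖ ≤ C * ‖y‖)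
    (hz : ‖z - z₀‖ < 1 / (2 * C)) (y : E) :
    ∃ x, (↑ₐ z - A) x = y ∧ ‖x‖ ≤ 2 * C * ‖y‖ := by
  have hsplit : ↑ₐ z - A = (↑ₐ z₀ - A) + ↑ₐ (z - z₀) := by
    rw [map_sub]; abel
  have hsmall : ‖↑ₐ (z - z₀)‖ * C ≤ 1 / 2 :=
    calc ‖↑ₐ (z - z₀)‖ * C ≤ 1 / (2 * C) * C := by
          gcongr; exact (norm_algebraMap_le _).trans hz.le
    _ = 1 / 2 := by field_simp
  rw [hsplit]
  exact exists_preimage_norm_le_add hC.le h₀ hsmall y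

theorem mem_resolventSet_of_surjective_of_mem_closure [CompleteSpace E] (A : E →L[𝕜] E) {z : 𝕜}
    (hsurj : Function.Surjective (↑ₐ z - A)) (hz : z ∈ closure (resolventSet 𝕜 A)) :
    z ∈ resolventSet 𝕜 A := by
  rw [spectrum.mem_resolventSet_iff]
  nontriviality (E →L[𝕜] E)
  obtain ⟨C, hC, hpre⟩ := exists_preimage_norm_le _ hsurj
  obtain ⟨z', hz', hdist⟩ := Metric.mem_closure_iff.1 hz (1 / (2 * C)) (by positivity)
  rw [dist_eq_norm] at hdist
  set u := (spectrum.mem_resolventSet_iff.1 hz').unit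
  have hu_inv : ‖(↑u⁻¹ : E →L[𝕜] E)‖ ≤ 2 * C :=
    norm_inverse_le_of_preimage_norm_le u (by positivity)
      (exists_preimage_norm_le_algebraMap_sub A hC hpre (by rwa [norm_sub_rev]))
  have hnear : ‖(↑ₐ z - A) - u‖ < ‖(↑u⁻¹ : E →L[𝕜] E)‖⁻¹ :=
    calc ‖(↑ₐ z - A) - u‖ = ‖↑ₐ (z - z')‖ := by simp [u, map_sub]
    _ ≤ ‖z - z'‖ := norm_algebraMap_le _
    _ < 1 / (2 * C) := hdist
    _ ≤ ‖(↑u⁻¹ : E →L[𝕜] E)‖⁻¹ := by rw [one_div]; exact inv_anti₀ (Units.norm_pos _) hu_inv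
  exact (u.ofNearby _ hnear).isUnit

end ContinuousLinearMap

section surjSpectrum

variable {E : Type*} [NormedAddCommGroup E] [NormedSpace ℂ E]

theorem mem_surjSpectrum_iff (A : E →L[ℂ] E) {z : ℂ} :
    z ∈ surjSpectrum A ↔ ¬Function.Surjective (algebraMap ℂ (E →L[ℂ] E) z - A) :=
  Iff.rfl

variable [CompleteSpace E]

theorem isClosed_surjSpectrum (A : E →L[ℂ] E) : IsClosed (surjSpectrum A) := by
  refine isOpen_compl_iff.1 <| Metric.isOpen_iff.2 fun z₀ hz₀ => ?_
  rw [Set.mem_compl_iff, mem_surjSpectrum_iff, not_not] at hz₀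
  obtain ⟨C, hC, hpre⟩ := ContinuousLinearMap.exists_preimage_norm_le _ hz₀
  refine ⟨1 / (2 * C), by positivity, fun z hz => ?_⟩
  rw [Metric.mem_ball, dist_eq_norm] at hz
  rw [Set.mem_compl_iff, mem_surjSpectrum_iff, not_not]
  exact fun y => (A.exists_preimage_norm_le_algebraMap_sub hC hpre hz y).imp fun _ h => h.1

theorem frontier_spectrum_subset_surjSpectrum (A : E →L[ℂ] E) :
    frontier (spectrum ℂ A) ⊆ surjSpectrum A := fun _ hz hsurj =>
  (spectrum.isClosed A).frontier_subset hz <|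
    A.mem_resolventSet_of_surjective_of_mem_closure hsurj
      (frontier_subset_closure ((frontier_compl (resolventSet ℂ A)).le hz))

theorem surjSpectrum_nonempty [Nontrivial E] (A : E →L[ℂ] E) : (surjSpectrum A).Nonempty :=
  (nonempty_frontier_iff.2 ⟨spectrum.nonempty A, (spectrum.isCompact A).ne_univ⟩).mono
    (frontier_spectrum_subset_surjSpectrum A)

end surjSpectrum

theorem IsPreconnected.eq_of_subset_union_singleton {X : Type*} [TopologicalSpace X] [T1Space X]
    {s t : Set X} {a : X} (hs : IsPreconnected s) (ht : IsClosed t) (hne : t.Nonempty)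
    (hts : t ⊆ s) (hst : s ⊆ t ∪ {a}) : s = t := by
  by_cases ha : a ∈ t
  · exact hts.antisymm' (by simpa [ha] using hst)
  refine hts.antisymm' ((isPreconnected_iff_subset_of_disjoint_closed.1 hs t {a} ht
    isClosed_singleton hst ?_).resolve_right ?_)
  · rw [Set.inter_singleton_eq_empty.2 ha, Set.inter_empty]
  · intro hsa
    obtain ⟨b, hb⟩ := hne
    exact ha (Set.mem_singleton_iff.1 (hsa (hts hb)) ▸ hb)

section Compression

variable {R X : Type*} [AddCommGroup X]

theorem sub_apply_mem_of_codisjoint [Ring R] [Module R X] {W K : Submodule R X}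
    (h : Codisjoint W K) {p : X →ₗ[R] X} (hW : ∀ w ∈ W, p w = w) (hK : ∀ x ∈ K, p x = 0)
    (x : X) : x - p x ∈ K := by
  obtain ⟨w, hw, k, hk, rfl⟩ := Submodule.mem_sup.1 (h.eq_top ▸ Submodule.mem_top : x ∈ W ⊔ K)
  simpa [hW w hw, hK k hk] using hk

theorem surjective_compression_of_surjective [Ring R] [Module R X] {T P : X →ₗ[R] X}
    {W : Submodule R X} {S : W →ₗ[R] W} (hPrange : ∀ x, P x ∈ W) (hPfix : ∀ w ∈ W, P w = w)
    (hker : ∀ x, x - P x ∈ LinearMap.ker T) (hS : ∀ w, (S w : X) = P (T w)) (z : R)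
    (hT : Function.Surjective fun x => z • x - T x) :
    Function.Surjective fun w => z • w - S w := by
  intro w
  obtain ⟨x, hx⟩ := hT w
  have hTP : T (P x) = T x := by rw [eq_comm, ← sub_eq_zero, ← map_sub]; exact hker x
  refine ⟨⟨P x, hPrange x⟩, Subtype.ext ?_⟩
  simp only [Submodule.coe_sub, Submodule.coe_smul, hS, hTP, ← map_smul, ← map_sub, hx]
  exact hPfix w w.2

theorem surjective_of_surjective_compression [DivisionRing R] [Module R X] {T P : X →ₗ[R] X}
    {W : Submodule R X} {S : W →ₗ[R] W} (hcodis : Codisjoint W (LinearMap.ker T))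
    (hker : ∀ x, x - P x ∈ LinearMap.ker T) (hS : ∀ w, (S w : X) = P (T w)) {z : R} (hz : z ≠ 0)
    (hS_surj : Function.Surjective fun w => z • w - S w) :
    Function.Surjective fun x => z • x - T x := by
  intro y
  obtain ⟨w, hw, n, hn, rfl⟩ :=
    Submodule.mem_sup.1 (hcodis.eq_top ▸ Submodule.mem_top : y ∈ W ⊔ LinearMap.ker T)
  obtain ⟨v, hv⟩ := hS_surj ⟨w, hw⟩
  have hvX : z • (v : X) - P (T v) = w := by simpa [hS] using congrArg Subtype.val hv
  -- correct `v` by a kernel vector that supplies both `n` and the defect `T v - P (T v)`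
  set k := T v - P (T v) with hk
  have hTk : T (z⁻¹ • (n + k)) = 0 := by
    rw [map_smul, map_add, LinearMap.mem_ker.1 hn, LinearMap.mem_ker.1 (hker _), add_zero,
      smul_zero]
  refine ⟨v + z⁻¹ • (n + k), ?_⟩
  show z • (v + z⁻¹ • (n + k)) - T (v + z⁻¹ • (n + k)) = w + n
  rw [map_add, hTk, add_zero, smul_add, smul_smul, mul_inv_cancel₀ hz, one_smul, ← hvX, hk]
  abel

end Compression

/-- If `X = W ⊕ N(T)` with projection `P` onto `W` along `N(T)`, and `S = P T|_W`,
then `σ_su(S) ⊆ σ_su(T) ⊆ σ_su(S) ∪ {0}`; if moreover `W ≠ 0` and `σ_su(T)`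
is connected, then `σ_su(T) = σ_su(S)`. -/
theorem surjSpectrum_compression
    {X : Type*} [NormedAddCommGroup X] [NormedSpace ℂ X] [CompleteSpace X]
    (T : X →L[ℂ] X) (W : Submodule ℂ X) (hWc : IsClosed (W : Set X))
    (hcompl : IsCompl W (LinearMap.ker (T : X →ₗ[ℂ] X)))
    (P : X →L[ℂ] X) (hPrange : ∀ x : X, P x ∈ W)
    (hPfix : ∀ w ∈ W, P w = w) (hPker : ∀ x ∈ LinearMap.ker (T : X →ₗ[ℂ] X), P x = 0)
    (S : ↥W →L[ℂ] ↥W) (hS : ∀ w : ↥W, (S w : X) = P (T (w : X))) :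
    surjSpectrum S ⊆ surjSpectrum T ∧
    surjSpectrum T ⊆ surjSpectrum S ∪ {0} ∧
    (W ≠ ⊥ → IsConnected (surjSpectrum T) → surjSpectrum T = surjSpectrum S) := by
  have hker := sub_apply_mem_of_codisjoint (p := (P : X →ₗ[ℂ] X)) hcompl.codisjoint hPfix hPker
  have hS_sub : surjSpectrum S ⊆ surjSpectrum T := fun z hz hT =>
    hz (surjective_compression_of_surjective (S := (S : W →ₗ[ℂ] W)) hPrange hPfix hker hS z hT)
  have hT_sub : surjSpectrum T ⊆ surjSpectrum S ∪ {0} := fun z hz =>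
    or_iff_not_imp_right.2 fun hz0 hS_surj =>
      hz (surjective_of_surjective_compression (S := (S : W →ₗ[ℂ] W)) hcompl.codisjoint hker hS
        hz0 hS_surj)
  refine ⟨hS_sub, hT_sub, fun hW hconn => ?_⟩
  have : CompleteSpace W := hWc.completeSpace_coe
  have : Nontrivial W := Submodule.nontrivial_iff_ne_bot.2 hW
  exact hconn.isPreconnected.eq_of_subset_union_singleton (isClosed_surjSpectrum S)
    (surjSpectrum_nonempty S) hS_sub hT_sub
end
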